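/- arXiv:2412.01277 — 9 statements merged into one kernel-verified Lean document; each statement's English description precedes it below -/
import Mathlib

section
/- Let A be a valid MAPF solution, let w ∈ A be a wait action, and let a' ∈ A with a'.R ≠ w.R satisfy the type2 dependency w → a' (i.e., w.s = a'.g and w.t ≤ a'.t). Let a ∈ A be the action with a.R = w.R and a.t = w.t + 1. Then a.s = w.g and the type2 dependency a → a' holds (i.e., a.R ≠ a'.R, a.s = a'.g and a.t ≤ a'.t); consequently a' is reachable from w along the path w → a → a' that does not use the edge w → a', so the type2 dependency w → a' is redundant. -/
/-- An action is a 4-tuple of a start vertex `s`, goal vertex `g`,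
time step `t` and agent `R`. -/
structure MAPFAction (V Agent : Type) where
  s : V
  g : V
  t : ℕ
  R : Agent

/-- A set of actions is a valid MAPF solution if
(i) distinct simultaneous actions have distinct starts and distinct goals,
(ii) distinct actions of the same agent have distinct time steps, and
(iii) every action with positive time step has a previous action. -/
def ValidSolution {V Agent : Type} (A : Set (MAPFAction V Agent)) : Prop :=
  (∀ a ∈ A, ∀ b ∈ A, a ≠ b → a.t = b.t → a.s ≠ b.s ∧ a.g ≠ b.g) ∧
  (∀ a ∈ A, ∀ b ∈ A, a ≠ b → a.R = b.R → a.t ≠ b.t) ∧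
  (∀ b ∈ A, 0 < b.t → ∃ a ∈ A, a.R = b.R ∧ a.g = b.s ∧ a.t = b.t - 1)

/-- Type1 dependency `a → b`: same agent, `b` is the next time step. -/
def Type1Dep {V Agent : Type} (a b : MAPFAction V Agent) : Prop :=
  a.R = b.R ∧ b.t = a.t + 1

/-- Type2 dependency `a → b`: different agents, `a` starts where `b` ends,
and `a` occurs no later than `b`. -/
def Type2Dep {V Agent : Type} (a b : MAPFAction V Agent) : Prop :=
  a.R ≠ b.R ∧ a.s = b.g ∧ a.t ≤ b.t

/-- if `a'` has a type2 dependency on a wait action `w`, and `a` is the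
next action of `w`'s agent, then `a.s = w.g`, the type2 dependency `a → a'` holds, and
`a'` is reachable from `w` along `w → a → a'` without using the edge `w → a'`;
hence the type2 dependency `w → a'` is redundant. -/
theorem wait_outgoing_type2_redundant {V Agent : Type}
    (A : Set (MAPFAction V Agent)) (hA : ValidSolution A)
    (w : MAPFAction V Agent) (hwA : w ∈ A) (hwait : w.s = w.g)
    (a' : MAPFAction V Agent) (ha'A : a' ∈ A) (hR : a'.R ≠ w.R)
    (hdep_s : w.s = a'.g) (hdep_t : w.t ≤ a'.t)
    (a : MAPFAction V Agent) (haA : a ∈ A) (haR : a.R = w.R) (hat : a.t = w.t + 1) :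
    a.s = w.g ∧ (a.R ≠ a'.R ∧ a.s = a'.g ∧ a.t ≤ a'.t) ∧
    Relation.TransGen
      (fun x y => x ∈ A ∧ y ∈ A ∧ (Type1Dep x y ∨ Type2Dep x y) ∧ ¬(x = w ∧ y = a'))
      w a' := by

  obtain ⟨h1, h2, h3⟩ := hA
  -- previous action of a is w
  obtain ⟨p, hpA, hpR, hpg, hpt⟩ := h3 a haA (by omega)
  have hpt' : p.t = w.t := by omega
  have hpw : p = w := by
    by_contra hne
    exact h2 p hpA w hwA hne (hpR.trans haR) (by omega)
  have has : a.s = w.g := by rw [← hpg, hpw]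
  -- strict time inequality
  have hlt : w.t < a'.t := by
    rcases lt_or_eq_of_le hdep_t with h | h
    · exact h
    · exfalso
      have hne : w ≠ a' := fun he => hR (he ▸ rfl)
      have := (h1 w hwA a' ha'A hne h).2
      exact this (hwait ▸ hdep_s.symm ▸ rfl)
  have hdep2 : a.R ≠ a'.R ∧ a.s = a'.g ∧ a.t ≤ a'.t :=
    ⟨fun he => hR (he.symm.trans haR), by rw [has, ← hwait, hdep_s], by omega⟩
  refine ⟨has, hdep2, ?_⟩
  have hne1 : a ≠ a' := fun he => hdep2.1 (he ▸ rfl)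
  have hne2 : a ≠ w := fun he => by rw [he] at hat; omega
  exact Relation.TransGen.head
    ⟨hwA, haA, Or.inl ⟨haR.symm, hat⟩, fun h => hne1 h.2⟩
    (Relation.TransGen.single ⟨haA, ha'A, Or.inr hdep2, fun h => hne2 h.1⟩)
end

section
/- Let A be a valid MAPF solution, let w ∈ A be a wait action of agent R = w.R, and let a' ∈ A with a'.R ≠ R satisfy the type2 dependency w → a' (i.e., w.s = a'.g and w.t ≤ a'.t). Let m ∈ A be an action with m.R = R and m.t > w.t such that every action b ∈ A with b.R = R and w.t ≤ b.t < m.t is a wait action with b.s = w.s. Then m.s = w.s, a'.t ≥ m.t, and the type2 dependency m → a' holds; i.e., a' also depends on the next move action m of agent R after the wait action w. -/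
/-- if `a'` has a type2 dependency on a wait action `w` of agent `R = w.R`,
and `m` is an action of `R` after `w` such that all actions of `R` in between are
wait actions at `w.s`, then `m.s = w.s`, `m.t ≤ a'.t`, and the type2 dependency
`m → a'` holds: `a'` also depends on the next move action `m`. -/
theorem dep_on_wait_implies_dep_on_next_move {V Agent : Type}
    (A : Set (MAPFAction V Agent)) (hA : ValidSolution A)
    (w : MAPFAction V Agent) (hwA : w ∈ A) (hwait : w.s = w.g)
    (a' : MAPFAction V Agent) (ha'A : a' ∈ A) (hR : a'.R ≠ w.R)
    (hdep_s : w.s = a'.g) (hdep_t : w.t ≤ a'.t)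
    (m : MAPFAction V Agent) (hmA : m ∈ A) (hmR : m.R = w.R) (hmt : w.t < m.t)
    (hbetween : ∀ b ∈ A, b.R = w.R → w.t ≤ b.t → b.t < m.t → b.s = b.g ∧ b.s = w.s) :
    m.s = w.s ∧ m.t ≤ a'.t ∧ Type2Dep m a' := by
  obtain ⟨h1, h2, h3⟩ := hA
  -- previous action of m
  obtain ⟨p, hpA, hpR, hpg, hpt⟩ := h3 m hmA (by omega)
  have hpw : p.s = p.g ∧ p.s = w.s :=
    hbetween p hpA (hpR.trans hmR) (by omega) (by omega)
  have hms : m.s = w.s := by rw [← hpg, ← hpw.1, hpw.2]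
  -- agent w.R has an action at every time m.t - d
  have key : ∀ d, ∃ c ∈ A, c.R = w.R ∧ c.t = m.t - d := by
    intro d
    induction d with
    | zero => exact ⟨m, hmA, hmR, rfl⟩
    | succ d ih =>
      obtain ⟨c, hcA, hcR, hct⟩ := ih
      rcases Nat.eq_zero_or_pos c.t with h0 | h0
      · exact ⟨c, hcA, hcR, by omega⟩
      · obtain ⟨q, hqA, hqR, _, hqt⟩ := h3 c hcA h0
        exact ⟨q, hqA, hqR.trans hcR, by omega⟩
  have hma : m.t ≤ a'.t := by
    by_contra hlt
    push_neg at hlt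
    obtain ⟨c, hcA, hcR, hct⟩ := key (m.t - a'.t)
    have hct' : c.t = a'.t := by omega
    have hcw := hbetween c hcA hcR (by omega) (by omega)
    have hne : c ≠ a' := fun h => hR (h ▸ hcR)
    have := (h1 c hcA a' ha'A hne hct').2
    apply this
    rw [← hcw.1, hcw.2, hdep_s]
  exact ⟨hms, hma, fun h => hR ((h ▸ hmR) : a'.R = w.R), hms.trans hdep_s, hma⟩
end

section
/- Let A be a valid MAPF solution, let w ∈ A be a wait action with w.t > 0, let a ∈ A be a previous action of w (a.R = w.R, a.g = w.s and a.t = w.t − 1), and let a' ∈ A with a'.R ≠ w.R satisfy the type2 dependency a' → w (i.e., a'.s = w.g and a'.t ≤ w.t). Then the type2 dependency a' → a holds (i.e., a'.R ≠ a.R, a'.s = a.g and a'.t ≤ a.t); consequently w is reachable from a' along the path a' → a → w that does not use the edge a' → w, so the type2 dependency a' → w is redundant. -/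
/-- if a wait action `w` (with `w.t > 0`) has previous action `a` and a
type2 dependency `a' → w` holds, then the type2 dependency `a' → a` also holds, and
`w` is reachable from `a'` along `a' → a → w` without using the edge `a' → w`;
hence the type2 dependency `a' → w` is redundant. -/
theorem wait_incoming_type2_redundant {V Agent : Type}
    (A : Set (MAPFAction V Agent)) (hA : ValidSolution A)
    (w : MAPFAction V Agent) (hwA : w ∈ A) (hwait : w.s = w.g) (hwt : 0 < w.t)
    (a : MAPFAction V Agent) (haA : a ∈ A)
    (haR : a.R = w.R) (hag : a.g = w.s) (hat : a.t = w.t - 1)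
    (a' : MAPFAction V Agent) (ha'A : a' ∈ A) (hR : a'.R ≠ w.R)
    (hdep_s : a'.s = w.g) (hdep_t : a'.t ≤ w.t) :
    (a'.R ≠ a.R ∧ a'.s = a.g ∧ a'.t ≤ a.t) ∧
    Relation.TransGen
      (fun x y => x ∈ A ∧ y ∈ A ∧ (Type1Dep x y ∨ Type2Dep x y) ∧ ¬(x = a' ∧ y = w))
      a' w := by
  have hRa : a'.R ≠ a.R := haR ▸ hR
  have hne : a' ≠ w := fun h => hR (h ▸ rfl)
  have hat' : a'.t < w.t := by
    rcases lt_or_eq_of_le hdep_t with h | h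
    · exact h
    · exact absurd (hdep_s.trans hwait.symm)
        ((hA.1 a' ha'A w hwA hne h).1)
  have hle : a'.t ≤ a.t := hat ▸ Nat.le_pred_of_lt hat'
  have hs : a'.s = a.g := hdep_s.trans (hwait ▸ hag.symm)
  have hanw : a ≠ w := fun h => by rw [h] at hat; omega
  refine ⟨⟨hRa, hs, hle⟩, ?_⟩
  refine Relation.TransGen.head ⟨ha'A, haA, Or.inr ⟨hRa, hs, hle⟩,
    fun h => hanw h.2⟩ (Relation.TransGen.single ⟨haA, hwA, Or.inl ⟨haR, by omega⟩,
    fun h => hR (h.1 ▸ haR)⟩)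
end

section
/- Let A be a valid MAPF solution and assume that for every wait action w ∈ A there exists an action m ∈ A with m.R = w.R, m.t > w.t and m.s ≠ m.g (no agent ends its plan with a wait action). Let the full ADG be the directed graph on A whose edges are all type1 and all type2 dependencies, and let the reduced ADG be the directed graph on A whose edges are all type1 dependencies together with exactly those type2 dependencies a → b for which neither a nor b is a wait action. Then for all actions a, b ∈ A, b is reachable from a in the full ADG if and only if b is reachable from a in the reduced ADG; i.e., type2 dependencies incident to wait actions are redundant. -/
/-- Edge relation of the full ADG on `A`: all type1 and all type2 dependencies. -/
def FullADGEdge {V Agent : Type} (A : Set (MAPFAction V Agent))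
    (x y : MAPFAction V Agent) : Prop :=
  x ∈ A ∧ y ∈ A ∧ (Type1Dep x y ∨ Type2Dep x y)

/-- Edge relation of the reduced ADG on `A`: all type1 dependencies, plus those
type2 dependencies whose endpoints are both not wait actions. -/
def ReducedADGEdge {V Agent : Type} (A : Set (MAPFAction V Agent))
    (x y : MAPFAction V Agent) : Prop :=
  x ∈ A ∧ y ∈ A ∧ (Type1Dep x y ∨ (Type2Dep x y ∧ x.s ≠ x.g ∧ y.s ≠ y.g))

/-! A type2 dependency `a → b` is bypassed through moves. Let `n` be the first move of `a`'s
agent from time `a.t` on: it leaves `a.s`, it exists because no plan ends with a wait, and it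
happens by time `b.t`, since otherwise that agent would still stand on `a.s = b.g` when `b` ends
there. Let `c` be the last move of `b`'s agent up to time `b.t`: it enters `b.g`, and not before
time `n.t`, since otherwise both agents would start at `a.s` at time `n.t`. Then `n → c` is a
type2 dependency between moves, and `a →* n`, `c →* b` follow the type1 edges of the two
agents. -/

namespace ValidSolution

variable {V Agent : Type} {A : Set (MAPFAction V Agent)}

theorem eq_of_R_eq_of_t_eq (hA : ValidSolution A) {a b : MAPFAction V Agent}
    (ha : a ∈ A) (hb : b ∈ A) (hR : a.R = b.R) (ht : a.t = b.t) : a = b :=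
  not_not.mp fun hne => hA.2.1 a ha b hb hne hR ht

theorem exists_of_le_t (hA : ValidSolution A) {j : ℕ} :
    ∀ {m : MAPFAction V Agent}, m ∈ A → j ≤ m.t → ∃ c ∈ A, c.R = m.R ∧ c.t = j := by
  intro m hm hj
  induction hk : m.t - j generalizing m with
  | zero => exact ⟨m, hm, rfl, by omega⟩
  | succ k ih =>
    obtain ⟨p, hp, hpR, -, hpt⟩ := hA.2.2 m hm (by omega)
    obtain ⟨c, hc, hcR, hct⟩ := ih hp (by omega) (by omega)
    exact ⟨c, hc, hcR.trans hpR, hct⟩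

theorem reflTransGen_reducedADGEdge_of_R_eq (hA : ValidSolution A)
    {x : MAPFAction V Agent} (hx : x ∈ A) :
    ∀ {y : MAPFAction V Agent}, y ∈ A → x.R = y.R → x.t ≤ y.t →
      Relation.ReflTransGen (ReducedADGEdge A) x y := by
  intro y hy hR ht
  induction hk : y.t - x.t generalizing y with
  | zero => exact hA.eq_of_R_eq_of_t_eq hx hy hR (by omega) ▸ .refl
  | succ k ih =>
    obtain ⟨p, hp, hpR, -, hpt⟩ := hA.2.2 y hy (by omega)
    exact (ih hp (hR.trans hpR.symm) (by omega) (by omega)).tail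
      ⟨hp, hy, .inl ⟨hpR, by omega⟩⟩

theorem exists_move_from_or_wait (hA : ValidSolution A) {a : MAPFAction V Agent} (ha : a ∈ A) :
    ∀ {c : MAPFAction V Agent}, c ∈ A → c.R = a.R → a.t ≤ c.t →
      (∃ n ∈ A, n.R = a.R ∧ a.t ≤ n.t ∧ n.t ≤ c.t ∧ n.s = a.s ∧ n.s ≠ n.g) ∨
        (c.s = a.s ∧ c.g = a.s) := by
  intro c hc hR ht
  induction hk : c.t - a.t generalizing c with
  | zero =>
    obtain rfl := hA.eq_of_R_eq_of_t_eq hc ha hR (by omega)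
    by_cases hw : c.s = c.g
    · exact .inr ⟨rfl, hw.symm⟩
    · exact .inl ⟨c, hc, rfl, le_rfl, le_rfl, rfl, hw⟩
  | succ k ih =>
    obtain ⟨p, hp, hpR, hpg, hpt⟩ := hA.2.2 c hc (by omega)
    rcases ih hp (hpR.trans hR) (by omega) (by omega) with
      ⟨n, hn, hnR, h₁, h₂, hns, hnw⟩ | ⟨-, hpa⟩
    · exact .inl ⟨n, hn, hnR, h₁, by omega, hns, hnw⟩
    · have hcs : c.s = a.s := hpg ▸ hpa
      by_cases hw : c.s = c.g
      · exact .inr ⟨hcs, hw ▸ hcs⟩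
      · exact .inl ⟨c, hc, hR, by omega, le_rfl, hcs, hw⟩

theorem exists_move_to_or_wait (hA : ValidSolution A) {c : MAPFAction V Agent} (hc : c ∈ A) :
    ∀ {b : MAPFAction V Agent}, b ∈ A → c.R = b.R → c.t ≤ b.t →
      (∃ n ∈ A, n.R = b.R ∧ c.t ≤ n.t ∧ n.t ≤ b.t ∧ n.g = b.g ∧ n.s ≠ n.g) ∨
        (c.s = b.g ∧ c.g = b.g) := by
  intro b hb hR ht
  induction hk : b.t - c.t generalizing b with
  | zero =>
    obtain rfl := hA.eq_of_R_eq_of_t_eq hc hb hR (by omega)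
    by_cases hw : c.s = c.g
    · exact .inr ⟨hw, rfl⟩
    · exact .inl ⟨c, hc, rfl, le_rfl, le_rfl, rfl, hw⟩
  | succ k ih =>
    by_cases hw : b.s = b.g
    · obtain ⟨p, hp, hpR, hpg, hpt⟩ := hA.2.2 b hb (by omega)
      have hpb : p.g = b.g := hpg.trans hw
      rcases ih hp (hR.trans hpR.symm) (by omega) (by omega) with
        ⟨n, hn, hnR, h₁, h₂, hng, hnw⟩ | ⟨hcs, hcg⟩
      · exact .inl ⟨n, hn, hnR.trans hpR, h₁, by omega, hng.trans hpb, hnw⟩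
      · exact .inr ⟨hcs.trans hpb, hcg.trans hpb⟩
    · exact .inl ⟨b, hb, rfl, ht, le_rfl, rfl, hw⟩

theorem exists_move_type2Dep_of_type2Dep (hA : ValidSolution A)
    (hNoEndWait : ∀ w ∈ A, w.s = w.g → ∃ m ∈ A, m.R = w.R ∧ w.t < m.t ∧ m.s ≠ m.g)
    {a b : MAPFAction V Agent} (ha : a ∈ A) (hb : b ∈ A) (hab : Type2Dep a b) :
    ∃ n ∈ A, n.R = a.R ∧ a.t ≤ n.t ∧ n.s ≠ n.g ∧ Type2Dep n b := by
  obtain ⟨hR, hsg, ht⟩ := hab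
  obtain ⟨m, hm, hmR, hmt, hmw⟩ : ∃ m ∈ A, m.R = a.R ∧ a.t ≤ m.t ∧ m.s ≠ m.g := by
    by_cases haw : a.s = a.g
    · obtain ⟨m, hm, hmR, hmt, hmw⟩ := hNoEndWait a ha haw
      exact ⟨m, hm, hmR, hmt.le, hmw⟩
    · exact ⟨a, ha, rfl, le_rfl, haw⟩
  obtain ⟨c, hc, hcR, hct⟩ := hA.exists_of_le_t hm (min_le_left m.t b.t)
  rcases hA.exists_move_from_or_wait ha hc (hcR.trans hmR) (by omega) with
    ⟨n, hn, hnR, h₁, h₂, hns, hnw⟩ | ⟨hcs, hcg⟩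
  · exact ⟨n, hn, hnR, h₁, hnw, by rw [hnR]; exact hR, hns.trans hsg, by omega⟩
  · rcases min_choice m.t b.t with hmin | hmin
    · obtain rfl := hA.eq_of_R_eq_of_t_eq hc hm hcR (hct.trans hmin)
      exact absurd (hcs.trans hcg.symm) hmw
    · have hcb : c ≠ b := fun h => hR (h ▸ hcR.trans hmR).symm
      exact absurd (hcg.trans hsg) (hA.1 c hc b hb hcb (hct.trans hmin)).2

theorem exists_type2Dep_move_of_type2Dep (hA : ValidSolution A)
    {n b : MAPFAction V Agent} (hn : n ∈ A) (hb : b ∈ A) (hnb : Type2Dep n b) :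
    ∃ c ∈ A, c.R = b.R ∧ c.t ≤ b.t ∧ c.s ≠ c.g ∧ Type2Dep n c := by
  obtain ⟨hR, hsg, ht⟩ := hnb
  obtain ⟨d, hd, hdR, hdt⟩ := hA.exists_of_le_t hb ht
  rcases hA.exists_move_to_or_wait hd hb hdR (by omega) with
    ⟨c, hc, hcR, h₁, h₂, hcg, hcw⟩ | ⟨hds, -⟩
  · exact ⟨c, hc, hcR, h₂, hcw, by rw [hcR]; exact hR, hsg.trans hcg.symm, by omega⟩
  · have hdn : d ≠ n := fun h => hR (h ▸ hdR)
    exact absurd (hds.trans hsg.symm) (hA.1 d hd n hn hdn hdt).1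

theorem transGen_reducedADGEdge_of_type2Dep (hA : ValidSolution A)
    (hNoEndWait : ∀ w ∈ A, w.s = w.g → ∃ m ∈ A, m.R = w.R ∧ w.t < m.t ∧ m.s ≠ m.g)
    {a b : MAPFAction V Agent} (ha : a ∈ A) (hb : b ∈ A) (hab : Type2Dep a b) :
    Relation.TransGen (ReducedADGEdge A) a b := by
  obtain ⟨n, hn, hnR, hnt, hnw, hnb⟩ := hA.exists_move_type2Dep_of_type2Dep hNoEndWait ha hb hab
  obtain ⟨c, hc, hcR, hct, hcw, hnc⟩ := hA.exists_type2Dep_move_of_type2Dep hn hb hnb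
  have hnc_edge : ReducedADGEdge A n c := ⟨hn, hc, .inr ⟨hnc, hnw, hcw⟩⟩
  exact (Relation.TransGen.tail' (hA.reflTransGen_reducedADGEdge_of_R_eq ha hn hnR.symm hnt)
    hnc_edge).trans_left (hA.reflTransGen_reducedADGEdge_of_R_eq hc hb hcR hct)

theorem transGen_reducedADGEdge_of_fullADGEdge (hA : ValidSolution A)
    (hNoEndWait : ∀ w ∈ A, w.s = w.g → ∃ m ∈ A, m.R = w.R ∧ w.t < m.t ∧ m.s ≠ m.g)
    {x y : MAPFAction V Agent} (hxy : FullADGEdge A x y) :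
    Relation.TransGen (ReducedADGEdge A) x y := by
  obtain ⟨hx, hy, h₁ | h₂⟩ := hxy
  · exact .single ⟨hx, hy, .inl h₁⟩
  · exact hA.transGen_reducedADGEdge_of_type2Dep hNoEndWait hx hy h₂

end ValidSolution

theorem reducedADGEdge_le_fullADGEdge {V Agent : Type} (A : Set (MAPFAction V Agent)) :
    ReducedADGEdge A ≤ FullADGEdge A :=
  fun _ _ ⟨hx, hy, h⟩ => ⟨hx, hy, h.imp id And.left⟩

/-- if no agent ends its plan with a wait action, then the full ADG and
the reduced ADG (which drops type2 dependencies incident to wait actions) have the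
same reachability relation: type2 dependencies incident to wait actions are redundant. -/
theorem wait_actions_redundant_in_ADG {V Agent : Type}
    (A : Set (MAPFAction V Agent)) (hA : ValidSolution A)
    (hNoEndWait : ∀ w ∈ A, w.s = w.g →
      ∃ m ∈ A, m.R = w.R ∧ w.t < m.t ∧ m.s ≠ m.g) :
    ∀ a ∈ A, ∀ b ∈ A,
      (Relation.TransGen (FullADGEdge A) a b ↔ Relation.TransGen (ReducedADGEdge A) a b) :=
  fun a _ b _ =>
    ⟨Relation.TransGen.closed
        (fun _ _ => hA.transGen_reducedADGEdge_of_fullADGEdge hNoEndWait) a b,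
      Relation.TransGen.mono (reducedADGEdge_le_fullADGEdge A) a b⟩
end

section
/- Let A be a valid MAPF solution and let a, b ∈ A with a.R = b.R and a.t < b.t. Then b is reachable from a using only type1 dependencies, i.e., (a, b) lies in the transitive closure of the type1 dependency relation on A. -/
/-- for actions `a, b` of the same agent with `a.t < b.t`, `b` is
reachable from `a` using only type1 dependencies. -/
theorem type1_reachable_of_same_agent_lt {V Agent : Type}
    (A : Set (MAPFAction V Agent)) (hA : ValidSolution A)
    (a : MAPFAction V Agent) (haA : a ∈ A)
    (b : MAPFAction V Agent) (hbA : b ∈ A)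
    (hR : a.R = b.R) (ht : a.t < b.t) :
    Relation.TransGen (fun x y => x ∈ A ∧ y ∈ A ∧ Type1Dep x y) a b := by
  obtain ⟨_, huniq, hprev⟩ := hA
  suffices h : ∀ n, ∀ b ∈ A, a.R = b.R → a.t < b.t → b.t = n →
      Relation.TransGen (fun x y => x ∈ A ∧ y ∈ A ∧ Type1Dep x y) a b from
    h b.t b hbA hR ht rfl
  intro n
  induction n using Nat.strong_induction_on with
  | _ n ih =>
    intro b hbA hR ht hn
    subst hn
    obtain ⟨c, hcA, hcR, _, hct⟩ := hprev b hbA (by omega)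
    have hbt : c.t + 1 = b.t := by omega
    by_cases hca : c.t = a.t
    · have : c = a := by
        by_contra hne
        exact huniq c hcA a haA hne (hcR.trans hR.symm) hca
      subst this
      exact Relation.TransGen.single ⟨hcA, hbA, hcR, hbt.symm⟩
    · have hac : a.t < c.t := by omega
      exact (ih c.t (by omega) c hcA (hR.trans hcR.symm) hac rfl).tail
        ⟨hcA, hbA, hcR, hbt.symm⟩
end

section
/- Let A be a valid MAPF solution, let v be a vertex, and let c, c' ∈ A be consecutive candidate actions at v, i.e., c.s = c'.s = v, c.t < c'.t, and there is no c'' ∈ A with c''.s = v and c.t < c''.t < c'.t. Let b ∈ A be a previous action of c' (b.R = c'.R, b.g = c'.s and b.t = c'.t − 1). Then c is the unique time-maximal element of the set {x ∈ A : x.s = b.g ∧ x.t ≤ b.t}; i.e., c.s = b.g, c.t ≤ b.t, every x ∈ A with x.s = b.g and x.t ≤ b.t satisfies x.t ≤ c.t, and any such x with x.t = c.t equals c. -/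
/-- for consecutive candidate actions `c, c'` at a vertex `v` and a
previous action `b` of `c'`, the action `c` is the unique time-maximal element of
`{x ∈ A : x.s = b.g ∧ x.t ≤ b.t}`. -/
theorem prev_candidate_is_unique_time_maximal {V Agent : Type}
    (A : Set (MAPFAction V Agent)) (hA : ValidSolution A) (v : V)
    (c : MAPFAction V Agent) (hcA : c ∈ A) (hcs : c.s = v)
    (c' : MAPFAction V Agent) (hc'A : c' ∈ A) (hc's : c'.s = v)
    (hlt : c.t < c'.t)
    (hconsec : ∀ c'' ∈ A, c''.s = v → ¬(c.t < c''.t ∧ c''.t < c'.t))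
    (b : MAPFAction V Agent) (hbA : b ∈ A)
    (hbR : b.R = c'.R) (hbg : b.g = c'.s) (hbt : b.t = c'.t - 1) :
    c.s = b.g ∧ c.t ≤ b.t ∧
    (∀ x ∈ A, x.s = b.g → x.t ≤ b.t → x.t ≤ c.t) ∧
    (∀ x ∈ A, x.s = b.g → x.t ≤ b.t → x.t = c.t → x = c) := by
  have hbg' : b.g = v := hbg.trans hc's
  have hbt' : c.t ≤ b.t := by omega
  refine ⟨by rw [hcs, hbg'], hbt', ?_, ?_⟩
  · intro x hxA hxs hxt
    by_contra h
    exact hconsec x hxA (hxs.trans hbg') ⟨by omega, by omega⟩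
  · intro x hxA hxs hxt hteq
    by_contra hne
    exact (hA.1 x hxA c hcA hne hteq).1 (by rw [hxs, hbg', hcs])
end

section
/- Let A be a valid MAPF solution containing no wait actions, let v be a vertex, and let c, c' ∈ A be consecutive candidate actions at v, i.e., c.s = c'.s = v, c.t < c'.t, and there is no c'' ∈ A with c''.s = v and c.t < c''.t < c'.t. Then c' is reachable from c in the SCP graph of A. -/
/-- Edge relation of the SCP graph on `A`: all type1 dependencies, plus, for each
action `y`, the single edge `x → y` where `x` is the time-maximal element of
`D(y) = {z ∈ A : z.s = y.g ∧ z.t ≤ y.t}`, provided `x.R ≠ y.R`. -/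
def SCPEdge {V Agent : Type} (A : Set (MAPFAction V Agent))
    (x y : MAPFAction V Agent) : Prop :=
  x ∈ A ∧ y ∈ A ∧
  (Type1Dep x y ∨
    (x.s = y.g ∧ x.t ≤ y.t ∧ x.R ≠ y.R ∧
      ∀ z ∈ A, z.s = y.g → z.t ≤ y.t → z.t ≤ x.t))


lemma same_agent_chain {V Agent : Type} {A : Set (MAPFAction V Agent)}
    (hA : ValidSolution A) :
    ∀ n (a b : MAPFAction V Agent), a ∈ A → b ∈ A → a.R = b.R → a.t ≤ b.t →
      b.t = n → Relation.ReflTransGen (SCPEdge A) a b := by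
  intro n
  induction n with
  | zero =>
    intro a b ha hb hR hle hbt
    have hab : a = b := by
      by_contra h
      exact hA.2.1 a ha b hb h hR (by omega)
    subst hab; exact Relation.ReflTransGen.refl
  | succ n ih =>
    intro a b ha hb hR hle hbt
    by_cases heq : a.t = b.t
    · have hab : a = b := by
        by_contra h
        exact hA.2.1 a ha b hb h hR heq
      subst hab; exact Relation.ReflTransGen.refl
    · obtain ⟨q, hqA, hqR, hqg, hqt⟩ := hA.2.2 b hb (by omega)
      have chain := ih a q ha hqA (hqR ▸ hR) (by omega) (by omega)
      exact chain.tail ⟨hqA, hb, Or.inl ⟨hqR, by omega⟩⟩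

/-- in a wait-free valid MAPF solution, for consecutive candidate actions
`c, c'` at a vertex `v`, the action `c'` is reachable from `c` in the SCP graph. -/
theorem consecutive_candidates_reachable_in_SCP {V Agent : Type}
    (A : Set (MAPFAction V Agent)) (hA : ValidSolution A)
    (hNoWait : ∀ a ∈ A, a.s ≠ a.g) (v : V)
    (c : MAPFAction V Agent) (hcA : c ∈ A) (hcs : c.s = v)
    (c' : MAPFAction V Agent) (hc'A : c' ∈ A) (hc's : c'.s = v)
    (hlt : c.t < c'.t)
    (hconsec : ∀ c'' ∈ A, c''.s = v → ¬(c.t < c''.t ∧ c''.t < c'.t)) :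
    Relation.TransGen (SCPEdge A) c c' := by
  have hc't : 0 < c'.t := lt_of_le_of_lt (Nat.zero_le _) hlt
  obtain ⟨p, hpA, hpR, hpg, hpt⟩ := hA.2.2 c' hc'A hc't
  have hc'pt : c'.t = p.t + 1 := by omega
  have edge_p_c' : SCPEdge A p c' := ⟨hpA, hc'A, Or.inl ⟨hpR, hc'pt⟩⟩
  have hcpt : c.t ≤ p.t := by omega
  by_cases hR : c.R = p.R
  · exact Relation.TransGen.tail'
      (same_agent_chain hA p.t c p hcA hpA hR hcpt rfl) edge_p_c'
  · have edge_c_p : SCPEdge A c p := by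
      refine ⟨hcA, hpA, Or.inr ⟨?_, hcpt, hR, ?_⟩⟩
      · rw [hcs, hpg, hc's]
      · intro z hz hzs hzt
        by_contra h
        push_neg at h
        exact hconsec z hz (by rw [hzs, hpg, hc's]) ⟨h, by omega⟩
    exact Relation.TransGen.head edge_c_p (Relation.TransGen.single edge_p_c')
end

section
/- Let A be a valid MAPF solution containing no wait actions. Then for every action a ∈ A and every candidate action c ∈ A of a with c.s = a.g and c.t ≤ a.t, the action a is reachable from c in the SCP graph of A. In particular, the SCP graph, which adds for each action at most the single type2 edge from its latest candidate, preserves an (indirect) dependency c ⇝ a for all candidates c of a with c.t ≤ a.t, and thus maintains the action precedence order of the ADG. -/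
/-- in a wait-free valid MAPF solution, every action `a` is reachable in
the SCP graph from each of its candidate actions `c` (those with `c.s = a.g` and
`c.t ≤ a.t`): the SCP graph preserves the indirect dependency `c ⇝ a` and hence the
action precedence order of the ADG. -/
theorem SCP_preserves_candidate_dependencies {V Agent : Type}
    (A : Set (MAPFAction V Agent)) (hA : ValidSolution A)
    (hNoWait : ∀ a ∈ A, a.s ≠ a.g) :
    ∀ a ∈ A, ∀ c ∈ A, c.s = a.g → c.t ≤ a.t →
      Relation.TransGen (SCPEdge A) c a := by
  -- same-agent chain lemma
  have chain : ∀ n, ∀ a ∈ A, ∀ c ∈ A, c.R = a.R → c.t < a.t → a.t - c.t ≤ n →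
      Relation.TransGen (SCPEdge A) c a := by
    intro n
    induction n with
    | zero => intro a _ c _ _ hlt hle; omega
    | succ n ih =>
      intro a ha c hc hR hlt hle
      obtain ⟨a', ha', hR', hg', ht'⟩ := hA.2.2 a ha (by omega)
      have hedge : SCPEdge A a' a := ⟨ha', ha, Or.inl ⟨hR', by omega⟩⟩
      by_cases hca : c = a'
      · exact Relation.TransGen.single (hca ▸ hedge)
      · have hne : c.t ≠ a'.t := hA.2.1 c hc a' ha' hca (by rw [hR, hR'])
        exact Relation.TransGen.tail
          (ih a' ha' c hc (by rw [hR, hR']) (by omega) (by omega)) hedge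
  have main : ∀ n, ∀ a ∈ A, ∀ c ∈ A, c.s = a.g → c.t ≤ a.t → a.t - c.t ≤ n →
      Relation.TransGen (SCPEdge A) c a := by
    intro n
    induction n using Nat.strong_induction_on with
    | _ n ih =>
      intro a ha c hc hs ht hn
      by_cases hR : c.R = a.R
      · have hne : c ≠ a := by
          intro h; subst h; exact hNoWait c hc hs
        have hnet : c.t ≠ a.t := hA.2.1 c hc a ha hne hR
        exact chain (a.t - c.t) a ha c hc hR (by omega) le_rfl
      · by_cases hmax : ∀ z ∈ A, z.s = a.g → z.t ≤ a.t → z.t ≤ c.t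
        · exact Relation.TransGen.single ⟨hc, ha, Or.inr ⟨hs, ht, hR, hmax⟩⟩
        · push_neg at hmax
          obtain ⟨z, hz, hzs, hzt, hzc⟩ := hmax
          obtain ⟨z', hz', hzR, hzg, hzt'⟩ := hA.2.2 z hz (by omega)
          have hedge : SCPEdge A z' z := ⟨hz', hz, Or.inl ⟨hzR, by omega⟩⟩
          have hza : Relation.TransGen (SCPEdge A) z a :=
            ih (a.t - z.t) (by omega) a ha z hz hzs hzt le_rfl
          by_cases hcz : c = z'
          · exact Relation.TransGen.head (hcz ▸ hedge) hza
          · have hcz' : Relation.TransGen (SCPEdge A) c z' :=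
              ih (z'.t - c.t) (by omega) z' hz' c hc (by rw [hs, ← hzs, hzg])
                (by omega) le_rfl
            exact (hcz'.tail hedge).trans hza
  intro a ha c hc hs ht
  exact main (a.t - c.t) a ha c hc hs ht le_rfl
end

section
/- Let A be a valid MAPF solution containing no wait actions. Then for all actions a, b ∈ A, b is reachable from a in the full ADG (the directed graph on A whose edges are all type1 and all type2 dependencies) if and only if b is reachable from a in the SCP graph of A; i.e., the sparse SCP construction produces a graph with exactly the same reachability (action precedence) relation as the full ADG. -/
private lemma chain_lemma {V Agent : Type} {A : Set (MAPFAction V Agent)}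
    (hA : ValidSolution A) :
    ∀ n (x y : MAPFAction V Agent), x ∈ A → y ∈ A → x.R = y.R → x.t ≤ y.t → y.t ≤ n →
      Relation.ReflTransGen (SCPEdge A) x y := by
  intro n
  induction n with
  | zero =>
    intro x y hx hy hR hle hn
    have hxy : x = y := by
      by_contra hne
      exact hA.2.1 x hx y hy hne hR (by omega)
    exact hxy ▸ Relation.ReflTransGen.refl
  | succ n ih =>
    intro x y hx hy hR hle hn
    rcases eq_or_lt_of_le hle with heq | hlt
    · have hxy : x = y := by
        by_contra hne
        exact hA.2.1 x hx y hy hne hR heq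
      exact hxy ▸ Relation.ReflTransGen.refl
    · obtain ⟨y', hy', hR', hg', ht'⟩ := hA.2.2 y hy (by omega)
      have hyt : y.t = y'.t + 1 := by omega
      have edge : SCPEdge A y' y := ⟨hy', hy, Or.inl ⟨hR', hyt⟩⟩
      exact (ih x y' hx hy' (hR.trans hR'.symm) (by omega) (by omega)).tail edge

private lemma type2_reach {V Agent : Type} {A : Set (MAPFAction V Agent)}
    (hA : ValidSolution A) (hNoWait : ∀ a ∈ A, a.s ≠ a.g) :
    ∀ n (a b : MAPFAction V Agent), a ∈ A → b ∈ A → a.s = b.g → a.t ≤ b.t → a.R ≠ b.R →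
      b.t ≤ n → Relation.TransGen (SCPEdge A) a b := by
  intro n
  induction n using Nat.strong_induction_on with
  | _ n ih =>
  intro a b ha hb hs hle hR hn
  set S : Set ℕ := (fun z : MAPFAction V Agent => z.t) ''
      {z | z ∈ A ∧ z.s = b.g ∧ z.t ≤ b.t} with hS
  have hSne : S.Nonempty := ⟨a.t, a, ⟨ha, hs, hle⟩, rfl⟩
  have hSbdd : BddAbove S := ⟨b.t, fun t ht => by
    obtain ⟨z, ⟨_, _, hz⟩, rfl⟩ := ht; exact hz⟩
  obtain ⟨c, ⟨hcA, hcs, hclt⟩, hct⟩ := Nat.sSup_mem hSne hSbdd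
  have hmax : ∀ z ∈ A, z.s = b.g → z.t ≤ b.t → z.t ≤ c.t := by
    intro z hz hzs hzt
    have hct' : c.t = sSup S := hct
    rw [hct']
    exact le_csSup hSbdd ⟨z, ⟨hz, hzs, hzt⟩, rfl⟩
  have hac : a.t ≤ c.t := hmax a ha hs hle
  have hac_lt : a ≠ c → a.t < c.t := fun hne =>
    lt_of_le_of_ne hac (fun heq => (hA.1 a ha c hcA hne heq).1 (hs.trans hcs.symm))
  by_cases hRc : c.R = b.R
  · have hcb : c ≠ b := fun h => hNoWait b hb (h ▸ hcs)
    have hclt' : c.t < b.t := lt_of_le_of_ne hclt (hA.2.1 c hcA b hb hcb hRc)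
    have hchain : Relation.ReflTransGen (SCPEdge A) c b :=
      chain_lemma hA b.t c b hcA hb hRc (le_of_lt hclt') le_rfl
    have hcbT : Relation.TransGen (SCPEdge A) c b := by
      rcases (Relation.reflTransGen_iff_eq_or_transGen).mp hchain with h | h
      · exact absurd h.symm hcb
      · exact h
    by_cases hace : a = c
    · exact hace ▸ hcbT
    · have halt := hac_lt hace
      obtain ⟨c', hc'A, hc'R, hc'g, hc't⟩ := hA.2.2 c hcA (by omega)
      have hRa' : a.R ≠ c'.R := by rw [hc'R, hRc]; exact hR
      have hsg : a.s = c'.g := by rw [hc'g, hcs]; exact hs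
      have hrec : Relation.TransGen (SCPEdge A) a c' :=
        ih c'.t (by omega) a c' ha hc'A hsg (by omega) hRa' le_rfl
      have edge1 : SCPEdge A c' c := ⟨hc'A, hcA, Or.inl ⟨hc'R, by omega⟩⟩
      exact (hrec.tail edge1).trans hcbT
  · have edgecb : SCPEdge A c b := ⟨hcA, hb, Or.inr ⟨hcs, hclt, hRc, hmax⟩⟩
    by_cases hace : a = c
    · exact hace ▸ Relation.TransGen.single edgecb
    · have halt := hac_lt hace
      by_cases hRac : a.R = c.R
      · have hchain : Relation.ReflTransGen (SCPEdge A) a c :=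
          chain_lemma hA c.t a c ha hcA hRac (le_of_lt halt) le_rfl
        exact Relation.TransGen.tail' hchain edgecb
      · obtain ⟨c', hc'A, hc'R, hc'g, hc't⟩ := hA.2.2 c hcA (by omega)
        have hRa' : a.R ≠ c'.R := by rw [hc'R]; exact hRac
        have hsg : a.s = c'.g := by rw [hc'g, hcs]; exact hs
        have hrec : Relation.TransGen (SCPEdge A) a c' :=
          ih c'.t (by omega) a c' ha hc'A hsg (by omega) hRa' le_rfl
        have edge1 : SCPEdge A c' c := ⟨hc'A, hcA, Or.inl ⟨hc'R, by omega⟩⟩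
        exact (hrec.tail edge1).tail edgecb

/-- for a wait-free valid MAPF solution, the full ADG and the sparse SCP
graph have exactly the same reachability (action precedence) relation. -/
theorem SCP_reachability_eq_full_ADG {V Agent : Type}
    (A : Set (MAPFAction V Agent)) (hA : ValidSolution A)
    (hNoWait : ∀ a ∈ A, a.s ≠ a.g) :
    ∀ a ∈ A, ∀ b ∈ A,
      (Relation.TransGen (FullADGEdge A) a b ↔ Relation.TransGen (SCPEdge A) a b) := by
  intro a ha b hb
  clear ha hb
  have conv : ∀ x y : MAPFAction V Agent, FullADGEdge A x y →
      Relation.TransGen (SCPEdge A) x y := by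
    rintro x y ⟨hx, hy, h | h⟩
    · exact Relation.TransGen.single ⟨hx, hy, Or.inl h⟩
    · exact type2_reach hA hNoWait y.t x y hx hy h.2.1 h.2.2 h.1 le_rfl
  constructor
  · intro h
    induction h with
    | single h => exact conv _ _ h
    | tail h1 h2 ih => exact ih.trans (conv _ _ h2)
  · intro h
    induction h with
    | single h =>
      exact Relation.TransGen.single
        ⟨h.1, h.2.1, h.2.2.imp id fun ⟨hs, ht, hR, _⟩ => ⟨hR, hs, ht⟩⟩
    | tail h1 h2 ih =>
      exact ih.tail ⟨h2.1, h2.2.1, h2.2.2.imp id fun ⟨hs, ht, hR, _⟩ => ⟨hR, hs, ht⟩⟩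
end
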